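/- arXiv:1902.02280 — 2 statements merged into one kernel-verified Lean document; each statement's English description precedes it below -/
import Mathlib

section
/- Let (V, ω) be a symplectic vector space of dimension d = 2s, let K ⊆ V be a coisotropic subspace of codimension k, and let D ⊆ V be an isotropic subspace with D ∩ K = {0} and dim D = r < k. Then there exists an isotropic subspace D' ⊆ V with D ⊆ D', dim D' = r + 1, and D' ∩ K = {0}. -/
/-!
Pick `v ∈ D^⊥` outside `D ⊔ K` and set `D' = D ⊔ ⟨v⟩`; it is isotropic because `ω` is
alternating, one dimension larger because `v ∉ D`, and still transverse to `K` because
`v ∉ D ⊔ K`. Such a `v` exists: if `D^⊥ ≤ D ⊔ K`, then `(D ⊔ K)^⊥` lies in `D^⊥⊥ = D` and in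
`K^⊥ ≤ K`, hence vanishes, forcing `dim (D ⊔ K) = dim V`, whereas
`dim (D ⊔ K) ≤ r + dim K < k + dim K = dim V`.
-/

open Module Submodule

namespace LinearMap.BilinForm

section CommRing

variable {R M : Type*} [CommRing R] [AddCommGroup M] [Module R M] {B : LinearMap.BilinForm R M}
  {N L : Submodule R M}

theorem orthogonal_sup : B.orthogonal (N ⊔ L) = B.orthogonal N ⊓ B.orthogonal L := by
  refine le_antisymm (le_inf (orthogonal_le le_sup_left) (orthogonal_le le_sup_right)) ?_
  rintro x ⟨hxN, hxL⟩ y hy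
  obtain ⟨n, hn, l, hl, rfl⟩ := mem_sup.mp hy
  simp [hxN n hn, hxL l hl]

theorem le_orthogonal_comm (hB : B.IsRefl) : N ≤ B.orthogonal L ↔ L ≤ B.orthogonal N :=
  ⟨fun h _ hl _ hn => hB _ _ (h hn _ hl), fun h _ hn _ hl => hB _ _ (h hl _ hn)⟩

theorem sup_le_orthogonal_sup (hB : B.IsRefl) (hN : N ≤ B.orthogonal N)
    (hL : L ≤ B.orthogonal L) (hNL : N ≤ B.orthogonal L) :
    N ⊔ L ≤ B.orthogonal (N ⊔ L) := by
  rw [orthogonal_sup]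
  exact sup_le (le_inf hN hNL) (le_inf ((le_orthogonal_comm hB).mp hNL) hL)

theorem span_singleton_le_orthogonal_span_singleton (hB : B.IsAlt) (v : M) :
    R ∙ v ≤ B.orthogonal (R ∙ v) := by
  rw [span_singleton_le_iff_mem]
  intro n hn
  obtain ⟨c, rfl⟩ := mem_span_singleton.mp hn
  simp [hB v]

end CommRing

variable {𝕜 V : Type*} [Field 𝕜] [AddCommGroup V] [Module 𝕜 V] [FiniteDimensional 𝕜 V]
  {B : LinearMap.BilinForm 𝕜 V}

theorem exists_mem_orthogonal_notMem_sup (hB : B.Nondegenerate) (hB₀ : B.IsRefl)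
    {D K : Submodule 𝕜 V} (hK : B.orthogonal K ≤ K) (hDK : Disjoint D K)
    (hdim : finrank 𝕜 D + finrank 𝕜 K < finrank 𝕜 V) :
    ∃ v ∈ B.orthogonal D, v ∉ D ⊔ K := by
  by_contra! h
  have hD : B.orthogonal (D ⊔ K) ≤ D := by
    simpa [orthogonal_orthogonal hB hB₀ D] using orthogonal_le (B := B) h
  have hbot : B.orthogonal (D ⊔ K) = ⊥ :=
    le_bot_iff.mp (hDK.eq_bot ▸ le_inf hD ((orthogonal_le le_sup_right).trans hK))
  have hfull := finrank_orthogonal hB (D ⊔ K)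
  rw [hbot, finrank_bot] at hfull
  have := finrank_add_le_finrank_add_finrank D K
  have := Submodule.finrank_le (D ⊔ K)
  omega

end LinearMap.BilinForm

open LinearMap.BilinForm in
theorem isotropic_extension_step_general {V : Type*} [AddCommGroup V] [Module ℝ V]
    [FiniteDimensional ℝ V] (ω : LinearMap.BilinForm ℝ V)
    (halt : ω.IsAlt) (hnd : ω.Nondegenerate)
    (K : Submodule ℝ V) (hK : ω.orthogonal K ≤ K)
    (k : ℕ) (hk : Module.finrank ℝ V - Module.finrank ℝ K = k)
    (D : Submodule ℝ V) (hD : D ≤ ω.orthogonal D) (hDK : D ⊓ K = ⊥)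
    (r : ℕ) (hr : Module.finrank ℝ D = r) (hrk : r < k) :
    ∃ D' : Submodule ℝ V, D ≤ D' ∧ D' ≤ ω.orthogonal D' ∧
      Module.finrank ℝ D' = r + 1 ∧ D' ⊓ K = ⊥ := by
  have hdim : finrank ℝ D + finrank ℝ K < finrank ℝ V := by
    have := Submodule.finrank_le K
    omega
  obtain ⟨v, hvD, hv⟩ :=
    exists_mem_orthogonal_notMem_sup hnd halt.isRefl hK (disjoint_iff.mpr hDK) hdim
  refine ⟨D ⊔ ℝ ∙ v, le_sup_left, ?_, ?_, ?_⟩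
  · refine sup_le_orthogonal_sup halt.isRefl hD
      (span_singleton_le_orthogonal_span_singleton halt v) ?_
    rwa [le_orthogonal_comm halt.isRefl, span_singleton_le_iff_mem]
  · rw [finrank_sup_span_singleton fun h => hv (mem_sup_left h), hr]
  · rw [← disjoint_iff] at hDK ⊢
    exact (hDK.symm.disjoint_sup_right_of_disjoint_sup_left
      (disjoint_span_singleton_of_notMem (by rwa [sup_comm]))).symm

/-- Inductive step: an isotropic `D` transverse to a coisotropic `K` of codimension `k`,
with `dim D = r < k`, extends to an isotropic `D'` of dimension `r+1` still
transverse to `K`. -/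
theorem isotropic_extension_step {V : Type*} [AddCommGroup V] [Module ℝ V]
    [FiniteDimensional ℝ V] (ω : LinearMap.BilinForm ℝ V)
    (halt : ω.IsAlt) (hnd : ω.Nondegenerate)
    (s : ℕ) (hdim : Module.finrank ℝ V = 2 * s)
    (K : Submodule ℝ V) (hK : ω.orthogonal K ≤ K)
    (k : ℕ) (hk : Module.finrank ℝ V - Module.finrank ℝ K = k)
    (D : Submodule ℝ V) (hD : D ≤ ω.orthogonal D) (hDK : D ⊓ K = ⊥)
    (r : ℕ) (hr : Module.finrank ℝ D = r) (hrk : r < k) :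
    ∃ D' : Submodule ℝ V, D ≤ D' ∧ D' ≤ ω.orthogonal D' ∧
      Module.finrank ℝ D' = r + 1 ∧ D' ⊓ K = ⊥ :=
  isotropic_extension_step_general ω halt hnd K hK k hk D hD hDK r hr hrk
end

section
/- Let (V, ω) be a symplectic vector space of dimension d = 2s, let K ⊆ V be a coisotropic subspace of codimension k, and let x ∈ V be a vector with x ∉ K. Then there exists an isotropic subspace D ⊆ V with x ∈ D, dim D = k, and V = K ⊕ D. -/
/-!
Take a subspace `D` that is maximal among the isotropic subspaces containing `x` and meeting
`K` trivially (the span of `x` is one of them, since `ω` is alternating). If some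
`y ∈ Dᗮ` were not in `K ⊔ D`, then `D ⊔ span y` would be a larger such subspace; hence
`Dᗮ ≤ K ⊔ D`. Taking orthogonals, `(K ⊔ D)ᗮ ≤ Kᗮ ⊓ D ≤ K ⊓ D = 0`, so `K ⊔ D = V` by
nondegeneracy, and `dim D = codim K`.
-/

open Submodule

namespace LinearMap.BilinForm

theorem IsAlt.sup_span_singleton_le_orthogonal {R M : Type*} [CommRing R] [AddCommGroup M]
    [Module R M] {ω : LinearMap.BilinForm R M} (halt : ω.IsAlt) {I : Submodule R M}
    (hI : I ≤ ω.orthogonal I) {y : M} (hy : y ∈ ω.orthogonal I) :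
    I ⊔ R ∙ y ≤ ω.orthogonal (I ⊔ R ∙ y) := by
  intro a ha
  rw [mem_orthogonal_iff]
  intro b hb
  obtain ⟨i, hi, _, hty, rfl⟩ := mem_sup.1 ha
  obtain ⟨j, hj, _, huy, rfl⟩ := mem_sup.1 hb
  obtain ⟨t, rfl⟩ := mem_span_singleton.1 hty
  obtain ⟨u, rfl⟩ := mem_span_singleton.1 huy
  have hji : ω j i = 0 := hI hi j hj
  have hjy : ω j y = 0 := hy j hj
  have hyi : ω y i = 0 := halt.isRefl _ _ (hy i hi)
  simp [hji, hjy, hyi, halt y]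

variable {𝕜 V : Type*} [Field 𝕜] [AddCommGroup V] [Module 𝕜 V] [FiniteDimensional 𝕜 V]
  {ω : LinearMap.BilinForm 𝕜 V} {K : Submodule 𝕜 V}

theorem sup_eq_top_of_orthogonal_le_sup (hnd : ω.Nondegenerate) (hrefl : ω.IsRefl)
    (hK : ω.orthogonal K ≤ K) {I : Submodule 𝕜 V} (hKI : Disjoint K I)
    (h : ω.orthogonal I ≤ K ⊔ I) : K ⊔ I = ⊤ := by
  have hbot : ω.orthogonal (K ⊔ I) = ⊥ := by
    rw [eq_bot_iff, ← hKI.eq_bot]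
    exact le_inf ((orthogonal_le le_sup_left).trans hK)
      ((orthogonal_le h).trans (orthogonal_orthogonal hnd hrefl I).le)
  rw [← orthogonal_orthogonal hnd hrefl (K ⊔ I), hbot, orthogonal_bot]

theorem isCompl_of_maximal_isotropic (halt : ω.IsAlt) (hnd : ω.Nondegenerate)
    (hK : ω.orthogonal K ≤ K) {I₀ D : Submodule 𝕜 V}
    (hD : Maximal (fun J ↦ I₀ ≤ J ∧ J ≤ ω.orthogonal J ∧ Disjoint K J) D) :
    IsCompl K D := by
  obtain ⟨hI₀D, hDiso, hKD⟩ := hD.prop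
  refine ⟨hKD, codisjoint_iff.2 (sup_eq_top_of_orthogonal_le_sup hnd halt.isRefl hK hKD ?_)⟩
  intro y hy
  by_contra hyKD
  have hyD : y ∉ D := fun h ↦ hyKD (mem_sup_right h)
  have hlarger : I₀ ≤ D ⊔ 𝕜 ∙ y ∧ D ⊔ 𝕜 ∙ y ≤ ω.orthogonal (D ⊔ 𝕜 ∙ y) ∧
      Disjoint K (D ⊔ 𝕜 ∙ y) :=
    ⟨hI₀D.trans le_sup_left, halt.sup_span_singleton_le_orthogonal hDiso hy,
      hKD.disjoint_sup_right_of_disjoint_sup_left (disjoint_span_singleton_of_notMem hyKD)⟩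
  exact hyD (hD.le_of_ge hlarger le_sup_left (mem_sup_right (mem_span_singleton_self y)))

theorem exists_isotropic_isCompl_ge (halt : ω.IsAlt) (hnd : ω.Nondegenerate)
    (hK : ω.orthogonal K ≤ K) {I₀ : Submodule 𝕜 V} (hI₀ : I₀ ≤ ω.orthogonal I₀)
    (hKI₀ : Disjoint K I₀) :
    ∃ D : Submodule 𝕜 V, I₀ ≤ D ∧ D ≤ ω.orthogonal D ∧ IsCompl K D := by
  obtain ⟨D, -, hD⟩ := exists_maximal_ge_of_wellFoundedGT
    (fun J ↦ I₀ ≤ J ∧ J ≤ ω.orthogonal J ∧ Disjoint K J) I₀ ⟨le_rfl, hI₀, hKI₀⟩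
  exact ⟨D, hD.prop.1, hD.prop.2.1, isCompl_of_maximal_isotropic halt hnd hK hD⟩

end LinearMap.BilinForm

theorem exists_isotropic_complement_general {V : Type*} [AddCommGroup V] [Module ℝ V]
    [FiniteDimensional ℝ V] (ω : LinearMap.BilinForm ℝ V)
    (halt : ω.IsAlt) (hnd : ω.Nondegenerate)
    (K : Submodule ℝ V) (hK : ω.orthogonal K ≤ K)
    (k : ℕ) (hk : Module.finrank ℝ V - Module.finrank ℝ K = k)
    (x : V) (hx : x ∉ K) :
    ∃ D : Submodule ℝ V, x ∈ D ∧ D ≤ ω.orthogonal D ∧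
      Module.finrank ℝ D = k ∧ K ⊓ D = ⊥ ∧ K ⊔ D = ⊤ := by
  have hxiso : ℝ ∙ x ≤ ω.orthogonal (ℝ ∙ x) := by
    simpa using halt.sup_span_singleton_le_orthogonal bot_le (y := x) (by simp)
  obtain ⟨D, hxD, hDiso, hKD⟩ := LinearMap.BilinForm.exists_isotropic_isCompl_ge halt hnd hK
    hxiso (disjoint_span_singleton_of_notMem hx)
  have hrank := finrank_add_eq_of_isCompl hKD
  exact ⟨D, hxD (mem_span_singleton_self x), hDiso, by omega, hKD.inf_eq_bot, hKD.sup_eq_top⟩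

/-- Linear core of the main theorem: given a coisotropic `K` of codimension `k`
and `x ∉ K`, there is an isotropic complement `D` of `K` of dimension `k`
containing `x`. -/
theorem exists_isotropic_complement {V : Type*} [AddCommGroup V] [Module ℝ V]
    [FiniteDimensional ℝ V] (ω : LinearMap.BilinForm ℝ V)
    (halt : ω.IsAlt) (hnd : ω.Nondegenerate)
    (s : ℕ) (hdim : Module.finrank ℝ V = 2 * s)
    (K : Submodule ℝ V) (hK : ω.orthogonal K ≤ K)
    (k : ℕ) (hk : Module.finrank ℝ V - Module.finrank ℝ K = k)
    (x : V) (hx : x ∉ K) :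
    ∃ D : Submodule ℝ V, x ∈ D ∧ D ≤ ω.orthogonal D ∧
      Module.finrank ℝ D = k ∧ K ⊓ D = ⊥ ∧ K ⊔ D = ⊤ :=
  exists_isotropic_complement_general ω halt hnd K hK k hk x hx
end
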